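/- Let Γ be a distance-regular graph with diameter d and intersection numbers p_{ij}^k, let m ≥ 2 be a positive integer, and let G be a group of automorphisms of Γ all of whose vertex orbits have the same size, with n orbits. Let H be the characteristic matrix of the orbit partition and M_i the quotient matrix of the distance-i matrix A_i with respect to this partition (so A_i H = H M_i). If there exists i ∈ {1,...,d} such that m divides p_{ii}^k for all k ∈ {0,1,...,d}, then the ℤ/mℤ-submodule of (ℤ/mℤ)^n spanned by the rows of M_i reduced modulo m is self-orthogonal; equivalently, M_i · M_iᵀ = 0 over ℤ/mℤ. -/

import Mathlib

open Matrix Finset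

/-!
Write `H` for the characteristic matrix of the orbit partition and `A = A_i`. Equal orbit sizes `c`
give `HᵀH = c • 1`, so `c • M_i = HᵀAH` is symmetric, hence so is `M_i`. Since
`(A²)_{uv} = p_{ii}^{dist(u,v)} ≡ 0 (mod m)` and `H M_i² = A² H` with `H` left-cancellable (no orbit
is empty), `M_i² ≡ 0`. So `M_i M_iᵀ = M_i² ≡ 0 (mod m)`: the rows are pairwise orthogonal, and
orthogonality extends bilinearly to their span.
-/

namespace Matrix

section Partition

variable {V ι : Type*} [DecidableEq ι]

def partitionMatrix (R : Type*) [Zero R] [One R] (o : V → ι) : Matrix V ι R :=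
  of fun x j => if o x = j then 1 else 0

variable {R : Type*} (o : V → ι)

theorem map_partitionMatrix {S : Type*} [NonAssocSemiring R] [NonAssocSemiring S]
    (f : R →+* S) : (partitionMatrix R o).map f = partitionMatrix S o := by
  ext x j
  simp [partitionMatrix, apply_ite f]

theorem partitionMatrix_transpose_mul_self [Fintype V] [NonAssocSemiring R] (c : ℕ)
    (hc : ∀ j, #{x | o x = j} = c) :
    (partitionMatrix R o)ᵀ * partitionMatrix R o = c • 1 := by
  ext j l
  simp only [partitionMatrix, mul_apply, transpose_apply, of_apply, mul_boole, ← ite_and,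
    sum_boole, smul_apply, one_apply]
  split_ifs with hjl
  · simp [hjl, hc]
  · rw [filter_eq_empty_iff.2 fun x _ h => hjl (h.2.symm.trans h.1)]
    simp

variable [Fintype ι]

theorem partitionMatrix_mul_apply [NonAssocSemiring R] {κ : Type*} (X : Matrix ι κ R)
    (u : V) (l : κ) : (partitionMatrix R o * X) u l = X (o u) l := by
  simp [partitionMatrix, mul_apply]

theorem partitionMatrix_mul_injective [NonAssocSemiring R] {κ : Type*}
    (ho : Function.Surjective o) :
    Function.Injective (partitionMatrix R o * · : Matrix ι κ R → Matrix V κ R) := by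
  intro X Y h
  ext j l
  obtain ⟨u, rfl⟩ := ho j
  simpa only [partitionMatrix_mul_apply] using congrFun (congrFun h u) l

theorem mul_self_eq_zero_of_mul_partitionMatrix_eq [Fintype V] [Semiring R]
    {A : Matrix V V R} {M : Matrix ι ι R}
    (hAM : A * partitionMatrix R o = partitionMatrix R o * M) (hA : A * A = 0)
    (ho : Function.Surjective o) : M * M = 0 :=
  partitionMatrix_mul_injective o ho <| calc
    partitionMatrix R o * (M * M) = A * partitionMatrix R o * M := by
      rw [← Matrix.mul_assoc, hAM]
    _ = A * A * partitionMatrix R o := by rw [Matrix.mul_assoc, ← hAM, Matrix.mul_assoc]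
    _ = partitionMatrix R o * (0 : Matrix ι ι R) := by rw [hA, Matrix.zero_mul, Matrix.mul_zero]

theorem isSymm_of_mul_partitionMatrix_eq [Fintype V] [CommSemiring R] [IsAddTorsionFree R]
    {A : Matrix V V R} {M : Matrix ι ι R} (hA : A.IsSymm)
    (hAM : A * partitionMatrix R o = partitionMatrix R o * M) (ho : Function.Surjective o)
    (hsize : ∀ j₁ j₂, #{x | o x = j₁} = #{x | o x = j₂}) :
    M.IsSymm := by
  refine IsSymm.ext fun j l => ?_
  set c := #{x | o x = j}
  have hc : c ≠ 0 := by
    obtain ⟨u, rfl⟩ := ho j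
    exact card_ne_zero.2 ⟨u, by simp⟩
  have hcM : c • M = (partitionMatrix R o)ᵀ * A * partitionMatrix R o := by
    rw [Matrix.mul_assoc, hAM, ← Matrix.mul_assoc,
      partitionMatrix_transpose_mul_self o c (hsize · j), smul_mul, Matrix.one_mul]
  have hcMt : c • Mᵀ = c • M := by
    rw [← transpose_smul, hcM, transpose_mul, transpose_mul, hA.eq, transpose_transpose,
      Matrix.mul_assoc]
  exact IsAddTorsionFree.nsmul_right_injective hc (congrFun (congrFun hcMt l) j).symm

end Partition

theorem dotProduct_eq_zero_of_mem_span_rows {ι κ R : Type*} [Fintype κ] [CommSemiring R]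
    {N : Matrix ι κ R} (hN : N * Nᵀ = 0) {u v : κ → R}
    (hu : u ∈ Submodule.span R (Set.range N)) (hv : v ∈ Submodule.span R (Set.range N)) :
    u ⬝ᵥ v = 0 := by
  refine LinearMap.BilinMap.apply_apply_mem_of_mem_span ⊥ _ _ (dotProductBilin R R) ?_ u v hu hv
  rintro _ ⟨r, rfl⟩ _ ⟨s, rfl⟩
  simpa [mul_apply, dotProduct] using congrFun (congrFun hN r) s

end Matrix

namespace SimpleGraph

variable {V : Type*} (R : Type*) (G : SimpleGraph V) (i : ℕ)

noncomputable def distMatrix [Zero R] [One R] : Matrix V V R :=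
  of fun u v => if G.dist u v = i then 1 else 0

theorem distMatrix_isSymm [Zero R] [One R] : (G.distMatrix R i).IsSymm :=
  IsSymm.ext fun u v => by simp [distMatrix, dist_comm]

theorem map_distMatrix {S : Type*} [NonAssocSemiring R] [NonAssocSemiring S] (f : R →+* S) :
    (G.distMatrix R i).map f = G.distMatrix S i := by
  ext u v
  simp [distMatrix, apply_ite f]

theorem distMatrix_mul_self_apply [Fintype V] [NonAssocSemiring R] (u v : V) :
    (G.distMatrix R i * G.distMatrix R i) u v = #{w | G.dist u w = i ∧ G.dist v w = i} := by
  simp only [distMatrix, mul_apply, of_apply, boole_mul, ← ite_and, sum_boole,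
    G.dist_comm (v := v)]

theorem distMatrix_mul_self_eq_zero [Fintype V] [NonAssocSemiring R] (m : ℕ) [CharP R m]
    (hm : ∀ u v, m ∣ #{w | G.dist u w = i ∧ G.dist v w = i}) :
    G.distMatrix R i * G.distMatrix R i = 0 := by
  ext u v
  rw [distMatrix_mul_self_apply, Matrix.zero_apply, CharP.cast_eq_zero_iff R m]
  exact hm u v

end SimpleGraph

theorem drg_quotient_matrix_spans_self_orthogonal_code_over_zmod_general
    {V : Type*} [Fintype V]
    (G : SimpleGraph V)
    (d : ℕ) (hdiam : ∀ u v, G.dist u v ≤ d)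
    (pnum : Fin (d + 1) → Fin (d + 1) → Fin (d + 1) → ℕ)
    (hdrg : ∀ i j k : Fin (d + 1), ∀ u v : V, G.dist u v = (k : ℕ) →
      (Finset.univ.filter fun w => G.dist u w = (i : ℕ) ∧ G.dist v w = (j : ℕ)).card
        = pnum i j k)
    (m n : ℕ)
    -- the orbit partition: `o x` is the index of the orbit of `x`, there are `n` orbits
    (o : V → Fin n) (ho : Function.Surjective o)
    -- all orbits have the same size
    (hsize : ∀ j₁ j₂ : Fin n, (Finset.univ.filter fun x => o x = j₁).card
        = (Finset.univ.filter fun x => o x = j₂).card)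
    -- the quotient matrices of the distance matrices with respect to the orbit partition
    (M : Fin (d + 1) → Matrix (Fin n) (Fin n) ℤ)
    (hM : ∀ i : Fin (d + 1),
      (Matrix.of fun u v => if G.dist u v = (i : ℕ) then (1 : ℤ) else 0)
          * (Matrix.of fun x j => if o x = j then (1 : ℤ) else 0)
        = (Matrix.of fun x j => if o x = j then (1 : ℤ) else 0) * M i)
    (i : Fin (d + 1))
    (hdiv : ∀ k, m ∣ pnum i i k) :
    (∀ u ∈ Submodule.span (ZMod m)
        (Set.range fun r => ((M i).map (Int.cast : ℤ → ZMod m)) r),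
     ∀ v ∈ Submodule.span (ZMod m)
        (Set.range fun r => ((M i).map (Int.cast : ℤ → ZMod m)) r),
       u ⬝ᵥ v = 0)
    ∧ ((M i).map (Int.cast : ℤ → ZMod m))
        * ((M i).map (Int.cast : ℤ → ZMod m))ᵀ = 0 := by
  have hAM : G.distMatrix ℤ i * partitionMatrix ℤ o = partitionMatrix ℤ o * M i := hM i
  have hsymm : (M i).IsSymm :=
    isSymm_of_mul_partitionMatrix_eq o (G.distMatrix_isSymm ℤ i) hAM ho hsize
  have hAA : G.distMatrix (ZMod m) i * G.distMatrix (ZMod m) i = 0 :=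
    G.distMatrix_mul_self_eq_zero _ _ m fun u v =>
      hdrg i i ⟨G.dist u v, Nat.lt_succ_of_le (hdiam u v)⟩ u v rfl ▸ hdiv _
  have hNN : (M i).map (Int.cast : ℤ → ZMod m) * (M i).map Int.cast = 0 := by
    refine mul_self_eq_zero_of_mul_partitionMatrix_eq o ?_ hAA ho
    have := congrArg (·.map (Int.castRingHom (ZMod m))) hAM
    rwa [Matrix.map_mul, Matrix.map_mul, SimpleGraph.map_distMatrix, map_partitionMatrix] at this
  have hNNt : (M i).map (Int.cast : ℤ → ZMod m) * ((M i).map Int.cast)ᵀ = 0 := by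
    rwa [(hsymm.map _).eq]
  exact ⟨fun u hu v hv => dotProduct_eq_zero_of_mem_span_rows hNNt hu hv, hNNt⟩

/-- Let `Γ` be a distance-regular graph of diameter `d` with intersection
numbers `p i j k`, and let a group `G` of automorphisms act on `Γ` with `n` orbits, all
of the same size.  If the integer `m ≥ 2` divides `p i i k` for all `k` (for some
`i ∈ {1, …, d}`), then the rows of the quotient matrix `M i` reduced mod `m` span a
self-orthogonal code of length `n` over `ℤ/mℤ`; equivalently `M i * (M i)ᵀ = 0`
over `ℤ/mℤ`. -/
theorem drg_quotient_matrix_spans_self_orthogonal_code_over_zmod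
    {V : Type*} [Fintype V] [DecidableEq V]
    (G : SimpleGraph V) (hconn : G.Connected)
    (d : ℕ) (hdiam : ∀ u v, G.dist u v ≤ d) (hdiam' : ∃ u v, G.dist u v = d)
    (pnum : Fin (d + 1) → Fin (d + 1) → Fin (d + 1) → ℕ)
    (hdrg : ∀ i j k : Fin (d + 1), ∀ u v : V, G.dist u v = (k : ℕ) →
      (Finset.univ.filter fun w => G.dist u w = (i : ℕ) ∧ G.dist v w = (j : ℕ)).card
        = pnum i j k)
    (m n : ℕ) (hmge : 2 ≤ m)
    -- a group of automorphisms of the graph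
    (S : Subgroup (Equiv.Perm V))
    (hS : ∀ g ∈ S, ∀ u v : V, G.Adj (g u) (g v) ↔ G.Adj u v)
    -- the orbit partition: `o x` is the index of the orbit of `x`, there are `n` orbits
    (o : V → Fin n) (ho : Function.Surjective o)
    (horb : ∀ u v : V, o u = o v ↔ ∃ g ∈ S, g u = v)
    -- all orbits have the same size
    (hsize : ∀ j₁ j₂ : Fin n, (Finset.univ.filter fun x => o x = j₁).card
        = (Finset.univ.filter fun x => o x = j₂).card)
    -- the quotient matrices of the distance matrices with respect to the orbit partition
    (M : Fin (d + 1) → Matrix (Fin n) (Fin n) ℤ)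
    (hM : ∀ i : Fin (d + 1),
      (Matrix.of fun u v => if G.dist u v = (i : ℕ) then (1 : ℤ) else 0)
          * (Matrix.of fun x j => if o x = j then (1 : ℤ) else 0)
        = (Matrix.of fun x j => if o x = j then (1 : ℤ) else 0) * M i)
    (i : Fin (d + 1)) (hi : i ≠ 0)
    (hdiv : ∀ k, m ∣ pnum i i k) :
    (∀ u ∈ Submodule.span (ZMod m)
        (Set.range fun r => ((M i).map (Int.cast : ℤ → ZMod m)) r),
     ∀ v ∈ Submodule.span (ZMod m)
        (Set.range fun r => ((M i).map (Int.cast : ℤ → ZMod m)) r),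
       u ⬝ᵥ v = 0)
    ∧ ((M i).map (Int.cast : ℤ → ZMod m))
        * ((M i).map (Int.cast : ℤ → ZMod m))ᵀ = 0 :=
  drg_quotient_matrix_spans_self_orthogonal_code_over_zmod_general G d hdiam pnum hdrg m n o ho
    hsize M hM i hdiv
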